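/- arXiv:1206.1017 — 6 statements merged into one kernel-verified Lean document; each statement's English description precedes it below -/
import Mathlib

section
/- If Y is finite and f is monotone, then a gf-compatible subset of Y exists if and only if ψ̄(Y) is nonempty; and in that case ψ̄(Y) is the unique maximal gf-compatible subset of Y, i.e. ψ̄(Y) is gf-compatible and every gf-compatible subset of Y is contained in ψ̄(Y). -/
/-- ψ(A) = {y ∈ A : g(y) ≤ f(A)}. -/
def psi {Y W : Type*} [PartialOrder W] (f : Set Y → W) (g : Y → W) (A : Set Y) : Set Y :=
  {y ∈ A | g y ≤ f A}

/-- ψ̄(A) = ∩_{k ≥ 1} ψ^(k)(A). -/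
def psiBar {Y W : Type*} [PartialOrder W] (f : Set Y → W) (g : Y → W) (A : Set Y) : Set Y :=
  ⋂ k : ℕ, (psi f g)^[k + 1] A

/-- A is gf-compatible if it is nonempty and g(y) ≤ f(A) for all y ∈ A. -/
def GFCompatible {Y W : Type*} [PartialOrder W] (f : Set Y → W) (g : Y → W) (A : Set Y) : Prop :=
  A.Nonempty ∧ ∀ y ∈ A, g y ≤ f A

/-- If Y is finite and f is monotone, then a gf-compatible subset of Y exists iff
ψ̄(Y) is nonempty; and in that case ψ̄(Y) is the unique maximal gf-compatible subset
of Y: it is gf-compatible and contains every gf-compatible subset of Y. -/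
theorem psiBar_unique_maximal {Y W : Type*} [Fintype Y] [PartialOrder W]
    (f : Set Y → W) (g : Y → W) (hf : Monotone f) :
    ((∃ A : Set Y, GFCompatible f g A) ↔ (psiBar f g (Set.univ : Set Y)).Nonempty) ∧
    ((psiBar f g (Set.univ : Set Y)).Nonempty →
      GFCompatible f g (psiBar f g (Set.univ : Set Y)) ∧
      ∀ A : Set Y, GFCompatible f g A → A ⊆ psiBar f g (Set.univ : Set Y)) := by
  classical
  set S : ℕ → Set Y := fun k => (psi f g)^[k] Set.univ with hS
  have hstep : ∀ k, S (k + 1) = psi f g (S k) := by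
    intro k; simp [hS, Function.iterate_succ_apply']
  have hsub : ∀ k, S (k + 1) ⊆ S k := by
    intro k; rw [hstep]; intro y hy; exact hy.1
  have hanti : ∀ i n, S (i + n) ⊆ S i := by
    intro i n
    induction n with
    | zero => rfl
    | succ n ih => exact (hsub (i + n)).trans ih
  have hcomp_sub : ∀ A : Set Y, GFCompatible f g A → ∀ k, A ⊆ S k := by
    intro A hA k
    induction k with
    | zero => simp [hS]
    | succ k ih =>
      rw [hstep]; intro y hy
      exact ⟨ih hy, le_trans (hA.2 y hy) (hf ih)⟩
  have hcomp_psiBar : ∀ A, GFCompatible f g A → A ⊆ psiBar f g Set.univ := by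
    intro A hA y hy
    exact Set.mem_iInter.2 fun k => hcomp_sub A hA (k + 1) hy
  -- existence of a fixed point of the iteration
  have hfix : ∃ k, S (k + 1) = S k := by
    by_contra h
    push_neg at h
    have hlt : ∀ k, (S (k + 1)).ncard < (S k).ncard := by
      intro k
      exact Set.ncard_lt_ncard (ssubset_of_ne_of_subset (h k) (hsub k)) (Set.toFinite _)
    have key : ∀ n, (S n).ncard + n ≤ (S 0).ncard := by
      intro n
      induction n with
      | zero => simp
      | succ n ih => have := hlt n; omega
    have := key ((S 0).ncard + 1); omega
  obtain ⟨k, hk⟩ := hfix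
  have hconst : ∀ n, S (k + n) = S k := by
    intro n
    induction n with
    | zero => rfl
    | succ n ih =>
      have : k + (n + 1) = (k + n) + 1 := by omega
      rw [this, hstep, ih, ← hstep, hk]
  have hbar : psiBar f g Set.univ = S k := by
    apply Set.Subset.antisymm
    · intro y hy
      have := Set.mem_iInter.1 hy k
      rw [show k + 1 = k + 1 from rfl] at this
      have : y ∈ S (k + 1) := this
      rwa [hk] at this
    · intro y hy
      rw [psiBar, Set.mem_iInter]
      intro j
      rcases le_or_gt (j + 1) k with hj | hj
      · have : S k ⊆ S (j + 1) := by
          have := hanti (j + 1) (k - (j + 1))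
          rwa [show j + 1 + (k - (j + 1)) = k by omega] at this
        exact this hy
      · have : S (j + 1) = S k := by
          have := hconst (j + 1 - k)
          rwa [show k + (j + 1 - k) = j + 1 by omega] at this
        rw [show (psi f g)^[j + 1] Set.univ = S (j + 1) from rfl, this]
        exact hy
  have hfixed : psi f g (psiBar f g Set.univ) = psiBar f g Set.univ := by
    rw [hbar, ← hstep, hk]
  constructor
  · constructor
    · rintro ⟨A, hA⟩
      exact hA.1.mono (hcomp_psiBar A hA)
    · intro hne
      refine ⟨psiBar f g Set.univ, hne, ?_⟩
      intro y hy
      rw [← hfixed] at hy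
      exact hy.2
  · intro hne
    refine ⟨⟨hne, ?_⟩, hcomp_psiBar⟩
    intro y hy
    rw [← hfixed] at hy
    exact hy.2
end

section
/- For a proper instance H of HORN-SAT, a subset A ⊆ Y is gf-compatible if and only if the truth assignment σ_A defined by σ_A(v) = false ⇔ v ∈ A satisfies every clause of H. -/
/-- A Horn clause: an optional positive literal and a finite set of negated variables,
at least one of which must be present. -/
structure HornClause (V : Type*) where
  pos : Option V
  neg : Finset V
  ok : pos ≠ none ∨ neg.Nonempty

/-- A truth assignment σ satisfies a Horn clause if its positive literal is true,
or some negated variable is false. -/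
def SatClause {V : Type*} (σ : V → Bool) (c : HornClause V) : Prop :=
  (∃ v, c.pos = some v ∧ σ v = true) ∨ (∃ v ∈ c.neg, σ v = false)

/-- H is a proper instance of HORN-SAT if some clause of H has no positive literal. -/
def ProperHorn {V : Type*} (H : Finset (HornClause V)) : Prop :=
  ∃ c ∈ H, c.pos = none

/-- Y: the set of variables occurring (positively or negatively) in clauses of H. -/
def hornVars {V : Type*} (H : Finset (HornClause V)) : Set V :=
  {v | ∃ c ∈ H, c.pos = some v ∨ v ∈ c.neg}

/-- f(A): the clauses of H containing at least one element of A as a negative literal. -/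
def hornF {V : Type*} (H : Finset (HornClause V)) (A : Set V) : Set (HornClause V) :=
  {c | c ∈ H ∧ ∃ v ∈ c.neg, v ∈ A}

/-- g(y): the clauses of H containing y as a positive literal, or no positive literal. -/
def hornG {V : Type*} (H : Finset (HornClause V)) (y : V) : Set (HornClause V) :=
  {c | c ∈ H ∧ (c.pos = some y ∨ c.pos = none)}

/-- ψ(A) = {y ∈ A : g(y) ⊆ f(A)}. -/
def hornPsi {V : Type*} (H : Finset (HornClause V)) (A : Set V) : Set V :=
  {y ∈ A | hornG H y ⊆ hornF H A}

/-- ψ̄(Y) = ∩_{k ≥ 1} ψ^(k)(Y). -/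
def hornPsiBar {V : Type*} (H : Finset (HornClause V)) : Set V :=
  ⋂ k : ℕ, (hornPsi H)^[k + 1] (hornVars H)

/-- A ⊆ Y is gf-compatible if A is nonempty and g(y) ⊆ f(A) for all y ∈ A. -/
def HornGFCompatible {V : Type*} (H : Finset (HornClause V)) (A : Set V) : Prop :=
  A.Nonempty ∧ ∀ y ∈ A, hornG H y ⊆ hornF H A

/-- (Lemma) For a proper instance H of HORN-SAT, a subset A of Y is gf-compatible iff
the truth assignment σ_A with σ_A(v) = false ⇔ v ∈ A satisfies every clause of H. -/
theorem horn_gfCompatible_iff_sat {V : Type*} (H : Finset (HornClause V))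
    (hH : ProperHorn H) (A : Set V) (hA : A ⊆ hornVars H)
    (σ : V → Bool) (hσ : ∀ v, σ v = false ↔ v ∈ A) :
    HornGFCompatible H A ↔ ∀ c ∈ H, SatClause σ c := by
  have hT : ∀ v, σ v = true ↔ v ∉ A := by
    intro v
    rw [← hσ v]
    cases σ v <;> simp
  constructor
  · rintro ⟨⟨a, ha⟩, hcomp⟩ c hc
    cases hp : c.pos with
    | none =>
      obtain ⟨-, v, hv, hvA⟩ := hcomp a ha ⟨hc, Or.inr hp⟩
      exact Or.inr ⟨v, hv, (hσ v).mpr hvA⟩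
    | some y =>
      by_cases hy : y ∈ A
      · obtain ⟨-, v, hv, hvA⟩ := hcomp y hy ⟨hc, Or.inl hp⟩
        exact Or.inr ⟨v, hv, (hσ v).mpr hvA⟩
      · exact Or.inl ⟨y, hp, (hT y).mpr hy⟩
  · intro hsat
    obtain ⟨c0, hc0, hp0⟩ := hH
    constructor
    · rcases hsat c0 hc0 with ⟨v, hv, -⟩ | ⟨v, hv, hvf⟩
      · rw [hp0] at hv; exact absurd hv (by simp)
      · exact ⟨v, (hσ v).mp hvf⟩
    · rintro y hy c ⟨hc, hpos⟩
      rcases hsat c hc with ⟨v, hv, hvt⟩ | ⟨v, hv, hvf⟩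
      · rcases hpos with h | h
        · rw [h] at hv
          exact absurd (Option.some_inj.mp hv ▸ hy) ((hT v).mp hvt)
        · rw [h] at hv; exact absurd hv (by simp)
      · exact ⟨hc, v, hv, (hσ v).mp hvf⟩
end

section
/- A proper instance H of HORN-SAT is satisfiable if and only if there exists a gf-compatible subset of Y, if and only if ψ̄(Y) is nonempty. -/
private lemma psi_mono {V : Type*} (H : Finset (HornClause V)) {A B : Set V} (h : A ⊆ B) :
    hornPsi H A ⊆ hornPsi H B := by
  rintro y ⟨hyA, hg⟩
  refine ⟨h hyA, fun c hc => ?_⟩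
  obtain ⟨hcH, v, hv, hvA⟩ := hg hc
  exact ⟨hcH, v, hv, h hvA⟩

private lemma psi_iter_succ_subset {V : Type*} (H : Finset (HornClause V)) (k : ℕ) :
    (hornPsi H)^[k + 1] (hornVars H) ⊆ (hornPsi H)^[k] (hornVars H) := by
  induction k with
  | zero => exact fun y hy => hy.1
  | succ k ih =>
    intro y hy
    rw [Function.iterate_succ_apply'] at hy
    rw [Function.iterate_succ_apply']
    exact psi_mono H ih hy

private lemma psi_iter_anti {V : Type*} (H : Finset (HornClause V)) {m n : ℕ} (h : m ≤ n) :
    (hornPsi H)^[n] (hornVars H) ⊆ (hornPsi H)^[m] (hornVars H) := by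
  induction n with
  | zero =>
    obtain rfl : m = 0 := Nat.le_zero.1 h
    exact fun _ hx => hx
  | succ n ih =>
    rcases Nat.lt_or_ge m (n + 1) with h' | h'
    · exact (psi_iter_succ_subset H n).trans (ih (Nat.lt_succ_iff.1 h'))
    · obtain rfl : m = n + 1 := le_antisymm h h'
      exact fun _ hx => hx

private lemma compat_subset_iter {V : Type*} (H : Finset (HornClause V)) {A : Set V}
    (hA : A ⊆ hornVars H) (hc : HornGFCompatible H A) (k : ℕ) :
    A ⊆ (hornPsi H)^[k] (hornVars H) := by
  induction k with
  | zero => exact hA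
  | succ k ih =>
    rw [Function.iterate_succ_apply']
    intro y hy
    refine ⟨ih hy, fun c hcc => ?_⟩
    obtain ⟨hcH, v, hv, hvA⟩ := hc.2 y hy hcc
    exact ⟨hcH, v, hv, ih hvA⟩

/-- A proper instance H of HORN-SAT is satisfiable iff a gf-compatible subset of Y exists,
iff ψ̄(Y) is nonempty. -/
theorem horn_satisfiable_iff {V : Type*} (H : Finset (HornClause V)) (hH : ProperHorn H) :
    ((∃ σ : V → Bool, ∀ c ∈ H, SatClause σ c) ↔
      ∃ A : Set V, A ⊆ hornVars H ∧ HornGFCompatible H A) ∧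
    ((∃ σ : V → Bool, ∀ c ∈ H, SatClause σ c) ↔ (hornPsiBar H).Nonempty) := by
  classical
  -- satisfiable → gf-compatible set exists
  have L1 : (∃ σ : V → Bool, ∀ c ∈ H, SatClause σ c) →
      ∃ A : Set V, A ⊆ hornVars H ∧ HornGFCompatible H A := by
    rintro ⟨σ, hσ⟩
    refine ⟨{v | v ∈ hornVars H ∧ σ v = false}, fun v hv => hv.1, ?_, ?_⟩
    · obtain ⟨c0, hc0, hp0⟩ := hH
      rcases hσ c0 hc0 with ⟨v, hv, _⟩ | ⟨v, hv, hσv⟩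
      · rw [hp0] at hv; cases hv
      · exact ⟨v, ⟨c0, hc0, Or.inr hv⟩, hσv⟩
    · rintro y ⟨hyY, hyF⟩ c ⟨hcH, hcp⟩
      have hex : ∃ v ∈ c.neg, σ v = false := by
        rcases hσ c hcH with ⟨w, hw, hσw⟩ | h
        · rcases hcp with h1 | h1
          · rw [h1] at hw; injection hw with hw; subst hw
            rw [hσw] at hyF; cases hyF
          · rw [h1] at hw; cases hw
        · exact h
      obtain ⟨v, hv, hσv⟩ := hex
      exact ⟨hcH, v, hv, ⟨⟨c, hcH, Or.inr hv⟩, hσv⟩⟩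
  -- gf-compatible set exists → satisfiable
  have L4 : (∃ A : Set V, A ⊆ hornVars H ∧ HornGFCompatible H A) →
      ∃ σ : V → Bool, ∀ c ∈ H, SatClause σ c := by
    rintro ⟨A, -, ⟨⟨y0, hy0⟩, hcomp⟩⟩
    refine ⟨fun v => if v ∈ A then false else true, fun c hc => ?_⟩
    match hp : c.pos with
    | some y =>
      by_cases hyA : y ∈ A
      · obtain ⟨-, v, hv, hvA⟩ := hcomp y hyA ⟨hc, Or.inl hp⟩
        exact Or.inr ⟨v, hv, if_pos hvA⟩
      · exact Or.inl ⟨y, hp, if_neg hyA⟩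
    | none =>
      obtain ⟨-, v, hv, hvA⟩ := hcomp y0 hy0 ⟨hc, Or.inr hp⟩
      exact Or.inr ⟨v, hv, if_pos hvA⟩
  -- ψ̄(Y) ⊆ Y
  have hbarY : hornPsiBar H ⊆ hornVars H := fun y hy =>
    psi_iter_succ_subset H 0 (Set.mem_iInter.1 hy 0)
  -- ψ̄(Y) nonempty → ψ̄(Y) gf-compatible
  have L3 : (hornPsiBar H).Nonempty → HornGFCompatible H (hornPsiBar H) := by
    intro hne
    refine ⟨hne, fun y hy c hc => ?_⟩
    obtain ⟨hcH, hcp⟩ := hc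
    set T : ℕ → Finset V :=
      fun k => c.neg.filter (fun v => v ∈ (hornPsi H)^[k + 1] (hornVars H)) with hT
    have hTne : ∀ k, (T k).Nonempty := by
      intro k
      have hy2 : y ∈ (hornPsi H)^[k + 2] (hornVars H) := Set.mem_iInter.1 hy (k + 1)
      rw [Function.iterate_succ_apply'] at hy2
      obtain ⟨-, hg⟩ := hy2
      obtain ⟨-, v, hv, hvA⟩ := hg ⟨hcH, hcp⟩
      exact ⟨v, Finset.mem_filter.2 ⟨hv, hvA⟩⟩
    have hTanti : ∀ m n, m ≤ n → T n ⊆ T m := by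
      intro m n hmn v hv
      rcases Finset.mem_filter.1 hv with ⟨h1, h2⟩
      exact Finset.mem_filter.2 ⟨h1, psi_iter_anti H (Nat.succ_le_succ hmn) h2⟩
    have hpex : ∃ n, ∃ k, (T k).card = n := ⟨(T 0).card, 0, rfl⟩
    obtain ⟨k0, hk0⟩ := Nat.find_spec hpex
    obtain ⟨v, hv⟩ := hTne k0
    have hvall : ∀ k, v ∈ T k := by
      intro k
      rcases le_total k k0 with h | h
      · exact hTanti k k0 h hv
      · have hsub := hTanti k0 k h
        have hle : Nat.find hpex ≤ (T k).card := Nat.find_min' hpex ⟨k, rfl⟩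
        have heq : T k = T k0 :=
          Finset.eq_of_subset_of_card_le hsub (by omega)
        rw [heq]; exact hv
    exact ⟨hcH, v, (Finset.mem_filter.1 hv).1,
      Set.mem_iInter.2 fun k => (Finset.mem_filter.1 (hvall k)).2⟩
  refine ⟨⟨L1, L4⟩, ?_, ?_⟩
  · intro hs
    obtain ⟨A, hAY, hAc⟩ := L1 hs
    obtain ⟨y0, hy0⟩ := hAc.1
    exact ⟨y0, Set.mem_iInter.2 fun k => compat_subset_iter H hAY hAc (k + 1) hy0⟩
  · intro hne
    exact L4 ⟨hornPsiBar H, hbarY, L3 hne⟩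
end

section
/- If a proper instance H of HORN-SAT is satisfiable, then the truth assignment σ* defined by σ*(v) = false ⇔ v ∈ ψ̄(Y) satisfies every clause of H, and σ* sets a minimal set of variables to 'true': for every truth assignment σ satisfying H, {y ∈ Y : σ*(y) = true} ⊆ {y ∈ Y : σ(y) = true}. -/
/-- If a proper instance H of HORN-SAT is satisfiable, then the truth assignment σ* with
σ*(v) = false ⇔ v ∈ ψ̄(Y) satisfies every clause of H, and σ* sets a minimal set of
variables to true: for every σ satisfying H,
{y ∈ Y : σ*(y) = true} ⊆ {y ∈ Y : σ(y) = true}. -/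
theorem horn_psiBar_minimal_assignment {V : Type*} (H : Finset (HornClause V))
    (hH : ProperHorn H) (hsat : ∃ σ : V → Bool, ∀ c ∈ H, SatClause σ c)
    (σstar : V → Bool) (hσstar : ∀ v, σstar v = false ↔ v ∈ hornPsiBar H) :
    (∀ c ∈ H, SatClause σstar c) ∧
    ∀ σ : V → Bool, (∀ c ∈ H, SatClause σ c) →
      {y ∈ hornVars H | σstar y = true} ⊆ {y ∈ hornVars H | σ y = true} := by
  classical
  obtain ⟨σ0, hσ0⟩ := hsat
  -- false-set of any satisfying assignment is contained in every iterate
  have key : ∀ (σ : V → Bool), (∀ c ∈ H, SatClause σ c) →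
      ∀ k, {y ∈ hornVars H | σ y = false} ⊆ (hornPsi H)^[k] (hornVars H) := by
    intro σ hσ k
    induction k with
    | zero => intro y hy; exact hy.1
    | succ k ih =>
      intro y hy
      rw [Function.iterate_succ_apply']
      refine ⟨ih hy, ?_⟩
      intro c hc
      have hcH := hc.1
      obtain hpos | hneg := hσ c hcH
      · obtain ⟨v, hv, hvt⟩ := hpos
        rcases hc.2 with h | h
        · rw [h] at hv; injection hv with hv; subst hv
          rw [hy.2] at hvt; cases hvt
        · rw [h] at hv; cases hv
      · obtain ⟨v, hv, hvf⟩ := hneg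
        exact ⟨hcH, v, hv, ih ⟨⟨c, hcH, Or.inr hv⟩, hvf⟩⟩
  have keyBar : ∀ σ, (∀ c ∈ H, SatClause σ c) →
      {y ∈ hornVars H | σ y = false} ⊆ hornPsiBar H := by
    intro σ hσ y hy
    exact Set.mem_iInter.2 fun k => key σ hσ (k + 1) hy
  have step : ∀ k, (hornPsi H)^[k + 1] (hornVars H) ⊆ (hornPsi H)^[k] (hornVars H) := by
    intro k
    rw [Function.iterate_succ_apply']
    intro y hy; exact hy.1
  have anti : ∀ k m, k ≤ m →
      (hornPsi H)^[m] (hornVars H) ⊆ (hornPsi H)^[k] (hornVars H) := by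
    intro k m hkm
    induction m with
    | zero => cases Nat.le_zero.mp hkm; exact subset_rfl
    | succ m ih =>
      rcases Nat.lt_or_ge k (m + 1) with h | h
      · exact fun y hy => ih (Nat.lt_succ_iff.mp h) (step m hy)
      · have : k = m + 1 := le_antisymm hkm h
        subst this; exact subset_rfl
  constructor
  · intro c hc
    rcases hcpos : c.pos with _ | y
    · obtain hp | hn := hσ0 c hc
      · obtain ⟨v, hv, _⟩ := hp; rw [hcpos] at hv; cases hv
      · obtain ⟨v, hvneg, hvf⟩ := hn
        refine Or.inr ⟨v, hvneg, ?_⟩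
        rw [hσstar]
        exact keyBar σ0 hσ0 ⟨⟨c, hc, Or.inr hvneg⟩, hvf⟩
    · by_cases hy : σstar y = true
      · exact Or.inl ⟨y, hcpos, hy⟩
      · have hyf : σstar y = false := by
          cases h : σstar y
          · rfl
          · exact absurd h hy
        have hybar : y ∈ hornPsiBar H := (hσstar y).1 hyf
        have hcg : c ∈ hornG H y := ⟨hc, Or.inl hcpos⟩
        have hk : ∀ k, ∃ v ∈ c.neg, v ∈ (hornPsi H)^[k + 1] (hornVars H) := by
          intro k
          have hy2 : y ∈ (hornPsi H)^[k + 2] (hornVars H) := Set.mem_iInter.1 hybar (k + 1)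
          rw [Function.iterate_succ_apply'] at hy2
          obtain ⟨-, hg⟩ := hy2
          obtain ⟨-, v, hv, hvA⟩ := hg hcg
          exact ⟨v, hv, hvA⟩
        have : ∃ v ∈ c.neg, v ∈ hornPsiBar H := by
          by_contra hcon
          push_neg at hcon
          have hch : ∀ v ∈ c.neg, ∃ k, v ∉ (hornPsi H)^[k + 1] (hornVars H) := by
            intro v hv
            have := hcon v hv
            simpa [hornPsiBar, Set.mem_iInter] using this
          choose kk hkk using hch
          set K : ℕ := c.neg.attach.sup (fun v => kk v.1 v.2) with hK
          obtain ⟨v, hv, hvmem⟩ := hk K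
          have hle : kk v hv ≤ K := Finset.le_sup (f := fun v : {x // x ∈ c.neg} => kk v.1 v.2)
            (Finset.mem_attach _ ⟨v, hv⟩)
          exact hkk v hv (anti (kk v hv + 1) (K + 1) (Nat.succ_le_succ hle) hvmem)
        obtain ⟨v, hv, hvbar⟩ := this
        exact Or.inr ⟨v, hv, (hσstar v).2 hvbar⟩
  · intro σ hσ y hy
    refine ⟨hy.1, ?_⟩
    cases h : σ y
    · have : y ∈ hornPsiBar H := keyBar σ hσ ⟨hy.1, h⟩
      have := (hσstar y).2 this
      rw [hy.2] at this; cases this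
    · rfl
end

section
/- For a chemical reaction system Q = (X, R, C) with food set F, the union of two RAFs is an RAF; consequently, if Q possesses at least one RAF, then Q possesses a unique maximal RAF, namely the union of all RAFs of Q, which contains every RAF of Q. -/
/-- A chemical reaction system over molecule types `M` and reactions `R`:
each reaction has a finite set of reactants and products, and `catal x r`
means molecule x catalyzes reaction r. -/
structure CRS (M R : Type*) where
  reactants : R → Finset M
  products : R → Finset M
  catal : M → R → Prop

/-- cl_A(F): the smallest set W ⊇ F such that for every r ∈ A with ρ(r) ⊆ W,
π(r) ⊆ W. -/
def clo {M R : Type*} (Q : CRS M R) (F : Set M) (A : Set R) : Set M :=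
  ⋂₀ {W : Set M | F ⊆ W ∧
    ∀ r ∈ A, (↑(Q.reactants r) : Set M) ⊆ W → (↑(Q.products r) : Set M) ⊆ W}

/-- R' is an RAF: nonempty, each reaction is catalyzed by some molecule in the closure
of the food set under R', and all its reactants lie in that closure. -/
def IsRAF {M R : Type*} (Q : CRS M R) (F : Set M) (R' : Set R) : Prop :=
  R'.Nonempty ∧ ∀ r ∈ R',
    (∃ x ∈ clo Q F R', Q.catal x r) ∧ (↑(Q.reactants r) : Set M) ⊆ clo Q F R'

/-- supp(r) = ρ(r) ∪ π(r). -/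
def suppr {M R : Type*} (Q : CRS M R) (r : R) : Set M :=
  (↑(Q.reactants r) : Set M) ∪ (↑(Q.products r) : Set M)

/-- supp(R') = ∪_{r ∈ R'} (ρ(r) ∪ π(r)). -/
def suppR {M R : Type*} (Q : CRS M R) (R' : Set R) : Set M :=
  ⋃ r ∈ R', suppr Q r


lemma clo_mono {M R : Type*} (Q : CRS M R) (F : Set M) {A B : Set R}
    (h : A ⊆ B) : clo Q F A ⊆ clo Q F B := by
  intro x hx
  intro W hW
  exact hx W ⟨hW.1, fun r hr => hW.2 r (h hr)⟩

/-- The union of two RAFs is an RAF; hence if Q possesses an RAF, the union of all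
RAFs is an RAF containing every RAF of Q (the unique maximal RAF). -/
theorem raf_union_and_unique_maximal {M R : Type*} [Fintype M] [Fintype R]
    (Q : CRS M R) (F : Set M) :
    (∀ A B : Set R, IsRAF Q F A → IsRAF Q F B → IsRAF Q F (A ∪ B)) ∧
    ((∃ A : Set R, IsRAF Q F A) →
      IsRAF Q F (⋃₀ {A : Set R | IsRAF Q F A}) ∧
      ∀ A : Set R, IsRAF Q F A → A ⊆ ⋃₀ {A : Set R | IsRAF Q F A}) := by

  have key : ∀ (S : Set (Set R)), (∀ A ∈ S, IsRAF Q F A) → S.Nonempty →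
      IsRAF Q F (⋃₀ S) := by
    intro S hS ⟨A, hA⟩
    constructor
    · obtain ⟨r, hr⟩ := (hS A hA).1
      exact ⟨r, A, hA, hr⟩
    · rintro r ⟨B, hB, hrB⟩
      have hsub : B ⊆ ⋃₀ S := fun x hx => ⟨B, hB, hx⟩
      obtain ⟨⟨x, hx, hcat⟩, hreac⟩ := (hS B hB).2 r hrB
      exact ⟨⟨x, clo_mono Q F hsub hx, hcat⟩, hreac.trans (clo_mono Q F hsub)⟩
  constructor
  · intro A B hA hB
    have := key {A, B} (by rintro C (rfl|rfl) <;> assumption) ⟨A, by simp⟩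
    simpa using this
  · rintro ⟨A, hA⟩
    exact ⟨key _ (fun C hC => hC) ⟨A, hA⟩, fun C hC x hx => ⟨C, hC, hx⟩⟩
end

section
/- (Theorem 1(iii)) For a chemical reaction system Q = (X, R, C) with food set F and inhibition pairs (X_1, R_1), …, (X_k, R_k): every maximal u-RAF (a u-RAF not properly contained in any other u-RAF) is of the form s(R^J ∩ R_J) for some J ⊆ [k]; more precisely, a maximal u-RAF R' satisfies R' = s(R^J ∩ R_J) for J = {j ∈ [k] : supp(R') ∩ X_j ≠ ∅}. -/
/-- Condition (u-2): for every i, if R' meets R_i then supp(R') avoids X_i. -/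
def CondU2 {M R : Type*} {k : ℕ} (Q : CRS M R)
    (Xi : Fin k → Set M) (Ri : Fin k → Set R) (R' : Set R) : Prop :=
  ∀ i : Fin k, (R' ∩ Ri i).Nonempty → suppR Q R' ∩ Xi i = ∅

/-- A u-RAF is an RAF satisfying condition (u-2). -/
def IsURAF {M R : Type*} {k : ℕ} (Q : CRS M R) (F : Set M)
    (Xi : Fin k → Set M) (Ri : Fin k → Set R) (R' : Set R) : Prop :=
  IsRAF Q F R' ∧ CondU2 Q Xi Ri R'

/-- R^J = {r ∈ R : supp(r) ∩ X_j = ∅ for all j ∉ J}. -/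
def RupJ {M R : Type*} {k : ℕ} (Q : CRS M R) (Xi : Fin k → Set M)
    (J : Set (Fin k)) : Set R :=
  {r | ∀ j ∉ J, suppr Q r ∩ Xi j = ∅}

/-- R_J = {r ∈ R : r ∉ R_j for all j ∈ J}. -/
def RdownJ {R : Type*} {k : ℕ} (Ri : Fin k → Set R) (J : Set (Fin k)) : Set R :=
  {r | ∀ j ∈ J, r ∉ Ri j}

/-- s(R*): the union of all RAFs contained in R* (the maximal RAF within R*,
or ∅ if none exists). -/
def sMax {M R : Type*} (Q : CRS M R) (F : Set M) (Rs : Set R) : Set R :=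
  ⋃₀ {A : Set R | A ⊆ Rs ∧ IsRAF Q F A}


lemma isRAF_union {M R : Type*} (Q : CRS M R) (F : Set M) {A B : Set R}
    (hA : IsRAF Q F A) (hB : IsRAF Q F B) : IsRAF Q F (A ∪ B) := by
  refine ⟨hA.1.mono Set.subset_union_left, ?_⟩
  rintro r (hr | hr)
  · obtain ⟨⟨x, hx, hc⟩, hsub⟩ := hA.2 r hr
    exact ⟨⟨x, clo_mono Q F Set.subset_union_left hx, hc⟩,
      hsub.trans (clo_mono Q F Set.subset_union_left)⟩
  · obtain ⟨⟨x, hx, hc⟩, hsub⟩ := hB.2 r hr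
    exact ⟨⟨x, clo_mono Q F Set.subset_union_right hx, hc⟩,
      hsub.trans (clo_mono Q F Set.subset_union_right)⟩

/-- (Theorem 1(iii)) Every maximal u-RAF R' is of the form s(R^J ∩ R_J); more
precisely R' = s(R^J ∩ R_J) for J = {j ∈ [k] : supp(R') ∩ X_j ≠ ∅}. -/
theorem maximal_uRAF_eq_sMax {M R : Type*} [Fintype M] [Fintype R] {k : ℕ}
    (Q : CRS M R) (F : Set M) (Xi : Fin k → Set M) (Ri : Fin k → Set R)
    (R' : Set R) (h : IsURAF Q F Xi Ri R')
    (hmax : ∀ R'' : Set R, IsURAF Q F Xi Ri R'' → R' ⊆ R'' → R'' = R') :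
    R' = sMax Q F (RupJ Q Xi {j : Fin k | (suppR Q R' ∩ Xi j).Nonempty} ∩
                   RdownJ Ri {j : Fin k | (suppR Q R' ∩ Xi j).Nonempty}) := by

  set J : Set (Fin k) := {j : Fin k | (suppR Q R' ∩ Xi j).Nonempty} with hJ
  have hsub : R' ⊆ RupJ Q Xi J ∩ RdownJ Ri J := by
    intro r hr
    constructor
    · intro j hj
      have hempty : suppR Q R' ∩ Xi j = ∅ := Set.not_nonempty_iff_eq_empty.mp hj
      have hss : suppr Q r ⊆ suppR Q R' := fun x hx => Set.mem_biUnion hr hx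
      apply Set.eq_empty_of_subset_empty
      rw [← hempty]
      exact Set.inter_subset_inter_left _ hss
    · intro j hj hrj
      exact (Set.not_nonempty_iff_eq_empty.mpr (h.2 j ⟨r, hr, hrj⟩)) hj
  apply Set.eq_of_subset_of_subset
  · exact Set.subset_sUnion_of_mem ⟨hsub, h.1⟩
  · intro r hr
    obtain ⟨A, ⟨hARs, hARAF⟩, hrA⟩ := hr
    have hUsub : R' ∪ A ⊆ RupJ Q Xi J ∩ RdownJ Ri J := Set.union_subset hsub hARs
    have hURAF : IsURAF Q F Xi Ri (R' ∪ A) := by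
      refine ⟨isRAF_union Q F h.1 hARAF, ?_⟩
      rintro i ⟨s, hs, hsi⟩
      have hiJ : i ∉ J := fun hiJ => (hUsub hs).2 i hiJ hsi
      apply Set.eq_empty_iff_forall_notMem.mpr
      rintro x ⟨hx1, hx2⟩
      obtain ⟨t, ht, hxt⟩ := Set.mem_iUnion₂.mp hx1
      exact Set.eq_empty_iff_forall_notMem.mp ((hUsub ht).1 i hiJ) x ⟨hxt, hx2⟩
    have heq := hmax (R' ∪ A) hURAF Set.subset_union_left
    rw [← heq]
    exact Or.inr hrA
end
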